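/- Existence of the exact modified Hamiltonian for the implicit midpoint rule for all quadratic Hamiltonians (instance of Proposition 1(b)): let S be a symmetric real 2n×2n matrix, h ≠ 0, and M = exp(h·J⁻¹S); assume M + I is invertible. Define Ĥ(y) = (1/h)·yᵀ·J·(M − I)·(M + I)⁻¹·y. Then Ĥ is a smooth function (a quadratic form, by the Cayley symmetry property) and for every y₀ ∈ ℝ^{2n}, setting y₁ = M·y₀ (the exact time-h flow of the Hamiltonian H(y) = ½yᵀSy), one has J⁻¹∇Ĥ((y₀ + y₁)/2) = (y₁ − y₀)/h. -/

import Mathlib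

open Matrix

noncomputable section

/-- Phase space ℝ^{2n}, with coordinates indexed by `Fin n ⊕ Fin n`
(`Sum.inl` = momentum coordinates `p`, `Sum.inr` = position coordinates `q`). -/
abbrev Phase (n : ℕ) := EuclideanSpace ℝ (Fin n ⊕ Fin n)

def toPhase {n : ℕ} (v : (Fin n ⊕ Fin n) → ℝ) : Phase n := WithLp.toLp 2 v

def ofPhase {n : ℕ} (y : Phase n) : (Fin n ⊕ Fin n) → ℝ := y

/-- The canonical symplectic matrix `J = [[0, I], [-I, 0]]`. -/
def J (n : ℕ) : Matrix (Fin n ⊕ Fin n) (Fin n ⊕ Fin n) ℝ :=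
  Matrix.fromBlocks 0 1 (-1) 0

/-- The symplectic gradient (Hamiltonian vector field) `J⁻¹ ∇H`. -/
def sympGrad {n : ℕ} (H : Phase n → ℝ) (y : Phase n) : Phase n :=
  toPhase ((J n)⁻¹.mulVec (ofPhase (gradient H y)))

/-- The Jacobian matrix of a map on phase space. -/
def jacMatrix {n : ℕ} (f : Phase n → Phase n) (y : Phase n) :
    Matrix (Fin n ⊕ Fin n) (Fin n ⊕ Fin n) ℝ :=
  Matrix.of fun i j => ofPhase (fderiv ℝ f y (EuclideanSpace.single j 1)) i

/- ### Auxiliary lemmas -/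

open scoped RealInnerProductSpace

lemma myJ_mul_negJ (n : ℕ) : _root_.J n * (-(_root_.J n)) = 1 := by
  simp only [_root_.J, Matrix.fromBlocks_neg, Matrix.fromBlocks_multiply]
  simp [← Matrix.fromBlocks_one]

lemma mynegJ_mul_J (n : ℕ) : (-(_root_.J n)) * _root_.J n = 1 := by
  simp only [_root_.J, Matrix.fromBlocks_neg, Matrix.fromBlocks_multiply]
  simp [← Matrix.fromBlocks_one]

lemma myJ_inv (n : ℕ) : (_root_.J n)⁻¹ = -(_root_.J n) := Matrix.inv_eq_right_inv (myJ_mul_negJ n)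

lemma myJ_isUnit (n : ℕ) : IsUnit (_root_.J n) :=
  ⟨⟨_root_.J n, -(_root_.J n), myJ_mul_negJ n, mynegJ_mul_J n⟩, rfl⟩

lemma myJ_transpose (n : ℕ) : (_root_.J n)ᵀ = -(_root_.J n) := by
  simp [_root_.J, Matrix.fromBlocks_transpose, Matrix.fromBlocks_neg]

lemma myJJ (n : ℕ) : _root_.J n * _root_.J n = -1 := by
  have := myJ_mul_negJ n
  rw [mul_neg, neg_eq_iff_eq_neg] at this
  exact this

lemma my_symplectic (n : ℕ) (S : Matrix (Fin n ⊕ Fin n) (Fin n ⊕ Fin n) ℝ) (hS : S.IsSymm)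
    (h : ℝ) (M : Matrix (Fin n ⊕ Fin n) (Fin n ⊕ Fin n) ℝ)
    (hM : M = NormedSpace.exp (h • ((_root_.J n)⁻¹ * S))) :
    Mᵀ * _root_.J n * M = _root_.J n := by
  set B := h • ((_root_.J n)⁻¹ * S) with hB
  have eL : Bᵀ = h • (S * _root_.J n) := by
    rw [hB, Matrix.transpose_smul, Matrix.transpose_mul, hS.eq, myJ_inv, Matrix.transpose_neg,
      myJ_transpose, neg_neg]
  have eR : _root_.J n * (-B) * (_root_.J n)⁻¹ = h • (S * _root_.J n) := by
    rw [hB, myJ_inv]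
    simp only [smul_neg, neg_mul, mul_neg, neg_neg, Matrix.mul_smul, Matrix.smul_mul]
    rw [← Matrix.mul_assoc, myJJ, neg_one_mul, neg_mul, smul_neg, neg_neg]
  have hBT : Bᵀ = _root_.J n * (-B) * (_root_.J n)⁻¹ := by rw [eL, eR]
  have hMT : Mᵀ = _root_.J n * NormedSpace.exp (-B) * (_root_.J n)⁻¹ := by
    rw [hM, ← Matrix.exp_transpose, hBT, Matrix.exp_conj _ _ (myJ_isUnit n)]
  rw [hMT, hM]
  have hinv : NormedSpace.exp (-B) * NormedSpace.exp B = 1 := by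
    have := Matrix.exp_add_of_commute (-B) B ((Commute.refl B).neg_left)
    rw [neg_add_cancel, NormedSpace.exp_zero] at this
    exact this.symm
  calc _root_.J n * NormedSpace.exp (-B) * (_root_.J n)⁻¹ * _root_.J n * NormedSpace.exp B
      = _root_.J n * (NormedSpace.exp (-B) * ((_root_.J n)⁻¹ * _root_.J n)
          * NormedSpace.exp B) := by noncomm_ring
    _ = _root_.J n := by
        rw [myJ_inv, mynegJ_mul_J, Matrix.mul_one, hinv, Matrix.mul_one]

lemma my_cayley_symm (n : ℕ) (M : Matrix (Fin n ⊕ Fin n) (Fin n ⊕ Fin n) ℝ)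
    (hsymp : Mᵀ * _root_.J n * M = _root_.J n) (hMinv : IsUnit (M + 1)) :
    (_root_.J n * (M - 1) * (M + 1)⁻¹).IsSymm := by
  have hdet : IsUnit (M + 1).det := (Matrix.isUnit_iff_isUnit_det _).mp hMinv
  have hdetT : IsUnit (Mᵀ + 1).det := by
    have : (Mᵀ + 1) = (M + 1)ᵀ := by rw [Matrix.transpose_add, Matrix.transpose_one]
    rw [this, Matrix.det_transpose]; exact hdet
  have hu1 : (M + 1) * (M + 1)⁻¹ = 1 := Matrix.mul_nonsing_inv _ hdet
  have hu3 : (Mᵀ + 1)⁻¹ * (Mᵀ + 1) = 1 := Matrix.nonsing_inv_mul _ hdetT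
  -- key algebraic identity
  have step : (Mᵀ - 1) * (-(_root_.J n)) * (M + 1) = (Mᵀ + 1) * (_root_.J n * (M - 1)) := by
    have e1 : (Mᵀ - 1) * (-(_root_.J n)) * (M + 1)
        = -(Mᵀ * _root_.J n * M) - Mᵀ * _root_.J n + _root_.J n * M + _root_.J n := by
      noncomm_ring
    have e2 : (Mᵀ + 1) * (_root_.J n * (M - 1))
        = Mᵀ * _root_.J n * M - Mᵀ * _root_.J n + _root_.J n * M - _root_.J n := by
      noncomm_ring
    rw [e1, e2, hsymp]
    abel
  unfold Matrix.IsSymm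
  have hAT : (_root_.J n * (M - 1) * (M + 1)⁻¹)ᵀ
      = (Mᵀ + 1)⁻¹ * ((Mᵀ - 1) * (-(_root_.J n))) := by
    rw [Matrix.transpose_mul, Matrix.transpose_mul, Matrix.transpose_nonsing_inv,
      Matrix.transpose_add, Matrix.transpose_one, Matrix.transpose_sub, Matrix.transpose_one,
      myJ_transpose]
  rw [hAT]
  calc (Mᵀ + 1)⁻¹ * ((Mᵀ - 1) * (-(_root_.J n)))
      = (Mᵀ + 1)⁻¹ * ((Mᵀ - 1) * (-(_root_.J n))) * ((M + 1) * (M + 1)⁻¹) := by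
        rw [hu1, Matrix.mul_one]
    _ = (Mᵀ + 1)⁻¹ * ((Mᵀ - 1) * (-(_root_.J n)) * (M + 1)) * (M + 1)⁻¹ := by
        noncomm_ring
    _ = (Mᵀ + 1)⁻¹ * ((Mᵀ + 1) * (_root_.J n * (M - 1))) * (M + 1)⁻¹ := by rw [step]
    _ = ((Mᵀ + 1)⁻¹ * (Mᵀ + 1)) * (_root_.J n * (M - 1)) * (M + 1)⁻¹ := by
        noncomm_ring
    _ = _root_.J n * (M - 1) * (M + 1)⁻¹ := by rw [hu3, Matrix.one_mul]

lemma quad_hasGradient {n : ℕ} (c : ℝ) (A : Matrix (Fin n ⊕ Fin n) (Fin n ⊕ Fin n) ℝ)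
    (hA : A.IsSymm) (y : Phase n) :
    HasGradientAt (fun z : Phase n => c * (ofPhase z ⬝ᵥ A.mulVec (ofPhase z)))
      ((2 * c) • toPhase (A.mulVec (ofPhase y))) y := by
  set T := Matrix.toEuclideanCLM (𝕜 := ℝ) A with hT
  have hfun : (fun z : Phase n => c * (ofPhase z ⬝ᵥ A.mulVec (ofPhase z)))
      = fun z : Phase n => c * ⟪z, T z⟫ := by
    funext z
    congr 1
    exact dotProduct_comm _ _
  rw [hfun, hasGradientAt_iff_hasFDerivAt]
  have h1 : HasFDerivAt (fun z : Phase n => ⟪z, T z⟫)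
      ((fderivInnerCLM ℝ (y, T y)).comp ((ContinuousLinearMap.id ℝ (Phase n)).prod T)) y :=
    (hasFDerivAt_id y).inner ℝ (T.hasFDerivAt)
  have h2 := h1.const_mul c
  convert h2 using 1
  · rfl
  ext v
  simp only [ContinuousLinearMap.coe_smul', Pi.smul_apply, ContinuousLinearMap.coe_comp',
    Function.comp_apply, ContinuousLinearMap.prod_apply, ContinuousLinearMap.coe_id', id_eq,
    fderivInnerCLM_apply, smul_eq_mul, InnerProductSpace.toDual_apply_apply]
  have key : ∀ u w : Phase n, ⟪u, T w⟫ = ⟪T u, w⟫ := by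
    intro u w
    simp only [hT, PiLp.inner_apply, RCLike.inner_apply, starRingEnd_apply, star_trivial]
    show (A.mulVec (ofPhase w)) ⬝ᵥ (ofPhase u) = (ofPhase w) ⬝ᵥ (A.mulVec (ofPhase u))
    rw [dotProduct_comm, Matrix.dotProduct_mulVec, ← Matrix.vecMul_transpose, hA.eq,
      dotProduct_comm]
  have : ⟪(2 * c) • toPhase (A.mulVec (ofPhase y)), v⟫ = (2 * c) * ⟪T y, v⟫ := by
    rw [real_inner_smul_left]; rfl
  rw [this, key y v, real_inner_comm v (T y)]
  ring

/-- existence of the exact modified Hamiltonian for the implicit midpoint rule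
for quadratic Hamiltonians: with `S` symmetric, `h ≠ 0`, `M = exp(h·J⁻¹S)` and `M + I`
invertible, the function `Ĥ(y) = (1/h)·yᵀ·J·(M−I)·(M+I)⁻¹·y` is smooth and satisfies
`J⁻¹∇Ĥ((y₀+y₁)/2) = (y₁ − y₀)/h` along the exact flow `y₁ = M·y₀`. -/
theorem stmt7 (n : ℕ) (S : Matrix (Fin n ⊕ Fin n) (Fin n ⊕ Fin n) ℝ) (hS : S.IsSymm)
    (h : ℝ) (hh : h ≠ 0)
    (M : Matrix (Fin n ⊕ Fin n) (Fin n ⊕ Fin n) ℝ)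
    (hM : M = NormedSpace.exp (h • ((J n)⁻¹ * S)))
    (hMinv : IsUnit (M + 1))
    (Hhat : Phase n → ℝ)
    (hHhat : Hhat = fun y =>
      (1 / h) * (ofPhase y ⬝ᵥ (J n * (M - 1) * (M + 1)⁻¹).mulVec (ofPhase y))) :
    ContDiff ℝ (⊤ : ℕ∞) Hhat ∧
      ∀ y₀ : Phase n,
        sympGrad Hhat ((2 : ℝ)⁻¹ • (y₀ + toPhase (M.mulVec (ofPhase y₀)))) =
          h⁻¹ • (toPhase (M.mulVec (ofPhase y₀)) - y₀) := by
  set A := _root_.J n * (M - 1) * (M + 1)⁻¹ with hA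
  have hsymp := my_symplectic n S hS h M hM
  have hAsymm : A.IsSymm := my_cayley_symm n M hsymp hMinv
  have hdet : IsUnit (M + 1).det := (Matrix.isUnit_iff_isUnit_det _).mp hMinv
  have hu2 : (M + 1)⁻¹ * (M + 1) = 1 := Matrix.nonsing_inv_mul _ hdet
  constructor
  · -- smoothness
    have hfun : Hhat = fun z : Phase n =>
        (1 / h) * ⟪z, Matrix.toEuclideanCLM (𝕜 := ℝ) A z⟫ := by
      rw [hHhat]
      funext z
      congr 1
      exact dotProduct_comm _ _
    rw [hfun]
    exact contDiff_const.mul (contDiff_id.inner ℝ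
      ((Matrix.toEuclideanCLM (𝕜 := ℝ) A).contDiff))
  · intro y₀
    have hgrad := (quad_hasGradient (1 / h) A hAsymm
      ((2 : ℝ)⁻¹ • (y₀ + toPhase (M.mulVec (ofPhase y₀))))).gradient
    rw [← hHhat] at hgrad
    show toPhase ((_root_.J n)⁻¹.mulVec (ofPhase (gradient Hhat _)))
      = h⁻¹ • (toPhase (M.mulVec (ofPhase y₀)) - y₀)
    rw [hgrad]
    -- now a pure vector computation
    show toPhase ((_root_.J n)⁻¹.mulVec ((2 * (1 / h)) •
        (A.mulVec ((2 : ℝ)⁻¹ • (ofPhase y₀ + M.mulVec (ofPhase y₀))))))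
      = toPhase (h⁻¹ • (M.mulVec (ofPhase y₀) - ofPhase y₀))
    congr 1
    set v := ofPhase y₀ with hv
    have e1 : ofPhase y₀ + M.mulVec (ofPhase y₀) = (M + 1).mulVec v := by
      rw [Matrix.add_mulVec, Matrix.one_mulVec, add_comm]
    have key : ((_root_.J n)⁻¹ * A) * (M + 1) = M - 1 := by
      rw [hA, myJ_inv]
      calc (-(_root_.J n)) * (_root_.J n * (M - 1) * (M + 1)⁻¹) * (M + 1)
          = ((-(_root_.J n)) * _root_.J n) * (M - 1) * ((M + 1)⁻¹ * (M + 1)) := by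
            noncomm_ring
        _ = M - 1 := by rw [mynegJ_mul_J, hu2, Matrix.one_mul, Matrix.mul_one]
    rw [e1, Matrix.mulVec_smul, Matrix.mulVec_mulVec, Matrix.mulVec_smul,
      Matrix.mulVec_mulVec, key, Matrix.sub_mulVec, Matrix.one_mulVec, smul_smul]
    congr 1
    ring
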